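/- For a tree T with no isolated vertices, the Laplacian ratio π(T) = per(L(T)) / ∏_{v∈V(T)} d(v) equals the sum over all matchings M of T of ∏_{uv∈M} 1/(d(u)d(v)). -/

import Mathlib

open Finset SimpleGraph Matrix


/-- The finset of matchings of a graph `G`: sets of pairwise disjoint edges. -/
def matchingsOf {n : ℕ} (G : SimpleGraph (Fin n)) [DecidableRel G.Adj] :
    Finset (Finset (Sym2 (Fin n))) :=
  G.edgeFinset.powerset.filter
    (fun M => ∀ e ∈ M, ∀ f ∈ M, e ≠ f → ∀ v : Fin n, ¬(v ∈ e ∧ v ∈ f))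

section Aux

variable {n : ℕ} (T : SimpleGraph (Fin n)) [DecidableRel T.Adj]

lemma lap_diag (v : Fin n) : T.lapMatrix ℚ v v = (T.degree v : ℚ) := by
  simp [SimpleGraph.lapMatrix, SimpleGraph.degMatrix, Matrix.diagonal]

lemma lap_off {v w : Fin n} (h : v ≠ w) :
    T.lapMatrix ℚ v w = if T.Adj v w then -1 else 0 := by
  simp [SimpleGraph.lapMatrix, SimpleGraph.degMatrix, Matrix.diagonal_apply_ne _ h]
  split <;> simp

variable {T}

lemma matching_sub {M : Finset (Sym2 (Fin n))} (hM : M ∈ matchingsOf T) :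
    M ⊆ T.edgeFinset := by
  have := (Finset.mem_filter.mp hM).1
  exact Finset.mem_powerset.mp this

lemma matching_uniq {M : Finset (Sym2 (Fin n))} (hM : M ∈ matchingsOf T)
    {e f : Sym2 (Fin n)} {v : Fin n} (he : e ∈ M) (hf : f ∈ M)
    (hve : v ∈ e) (hvf : v ∈ f) : e = f := by
  by_contra hne
  exact (Finset.mem_filter.mp hM).2 e he f hf hne v ⟨hve, hvf⟩

/-- The function sending each matched vertex to its partner. -/
noncomputable def mf (M : Finset (Sym2 (Fin n))) : Fin n → Fin n := fun v =>
  if h : ∃ e ∈ M, v ∈ e then Sym2.Mem.other' h.choose_spec.2 else v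

lemma mf_spec {M : Finset (Sym2 (Fin n))} {v : Fin n} (h : ∃ e ∈ M, v ∈ e) :
    s(v, mf M v) ∈ M := by
  rw [mf, dif_pos h, Sym2.other_spec' h.choose_spec.2]
  exact h.choose_spec.1

lemma mf_fixed {M : Finset (Sym2 (Fin n))} {v : Fin n} (h : ¬ ∃ e ∈ M, v ∈ e) :
    mf M v = v := dif_neg h

lemma mf_char {M : Finset (Sym2 (Fin n))} (hM : M ∈ matchingsOf T)
    {v w : Fin n} (he : s(v, w) ∈ M) : mf M v = w := by
  have h : ∃ e ∈ M, v ∈ e := ⟨s(v, w), he, by simp⟩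
  have h1 := mf_spec h
  have h2 : s(v, mf M v) = s(v, w) :=
    matching_uniq hM h1 he (Sym2.mem_mk_left v _) (Sym2.mem_mk_left v w)
  exact Sym2.congr_right.mp h2

lemma mf_ne {M : Finset (Sym2 (Fin n))} (hM : M ∈ matchingsOf T)
    {v : Fin n} (h : ∃ e ∈ M, v ∈ e) : mf M v ≠ v := by
  intro hv
  have h1 := mf_spec h
  rw [hv] at h1
  have := matching_sub hM h1
  rw [SimpleGraph.mem_edgeFinset, SimpleGraph.mem_edgeSet] at this
  exact this.ne rfl

lemma mf_invol {M : Finset (Sym2 (Fin n))} (hM : M ∈ matchingsOf T) :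
    Function.Involutive (mf M) := by
  intro v
  by_cases h : ∃ e ∈ M, v ∈ e
  · have h1 := mf_spec h
    rw [Sym2.eq_swap] at h1
    exact mf_char hM h1
  · rw [mf_fixed h, mf_fixed h]

/-- The permutation associated to a matching. -/
noncomputable def mperm {M : Finset (Sym2 (Fin n))} (hM : M ∈ matchingsOf T) :
    Equiv.Perm (Fin n) :=
  Function.Involutive.toPerm (mf M) (mf_invol hM)

@[simp] lemma mperm_apply {M : Finset (Sym2 (Fin n))} (hM : M ∈ matchingsOf T)
    (v : Fin n) : mperm hM v = mf M v := rfl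

/-- In an acyclic graph, any permutation moving every vertex along an edge is an
involution. -/
lemma invol_of_acyclic (hA : T.IsAcyclic) (σ : Equiv.Perm (Fin n))
    (hσ : ∀ v, σ v ≠ v → T.Adj (σ v) v) : ∀ v, σ (σ v) = v := by
  intro v
  by_contra hv
  have hmoved0 : σ v ≠ v := fun h => hv (by rw [h, h])
  classical
  set k := Function.minimalPeriod (⇑σ) v with hk
  have hper : v ∈ Function.periodicPts (⇑σ) := by
    refine ⟨orderOf σ, orderOf_pos σ, ?_⟩
    show (⇑σ)^[orderOf σ] v = v
    rw [Equiv.Perm.iterate_eq_pow, pow_orderOf_eq_one]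
    rfl
  have hkpos : 0 < k := Function.minimalPeriod_pos_of_mem_periodicPts hper
  have hkfix : (⇑σ)^[k] v = v := Function.isPeriodicPt_minimalPeriod (⇑σ) v
  have hk1 : k ≠ 1 := by
    intro h
    exact hmoved0 (by simpa [h] using hkfix)
  have hk2 : k ≠ 2 := by
    intro h
    apply hv
    have := hkfix
    rw [h] at this
    simpa [Function.iterate_succ_apply'] using this
  have hk3 : 3 ≤ k := by omega
  -- every vertex on the orbit is moved
  have hmoved : ∀ m, m < k → σ ((⇑σ)^[m] v) ≠ (⇑σ)^[m] v := by
    intro m hm heq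
    have hfp : Function.IsFixedPt (⇑σ) ((⇑σ)^[m] v) := heq
    have h2 : (⇑σ)^[k - m] ((⇑σ)^[m] v) = (⇑σ)^[m] v := hfp.iterate (k - m)
    have h3 : (⇑σ)^[k - m] ((⇑σ)^[m] v) = v := by
      rw [← Function.iterate_add_apply, Nat.sub_add_cancel hm.le, hkfix]
    have h4 : (⇑σ)^[m] v = v := by rw [← h2, h3]
    exact hmoved0 (by rw [h4] at hfp; exact hfp)
  -- adjacency along the orbit
  have hadj : ∀ m, m < k → T.Adj ((⇑σ)^[m] v) ((⇑σ)^[m + 1] v) := by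
    intro m hm
    rw [Function.iterate_succ_apply']
    exact (hσ _ (hmoved m hm)).symm
  -- build a walk along the orbit
  have aux : ∀ j, 1 ≤ j → j ≤ k →
      ∃ w : T.Walk ((⇑σ)^[1] v) ((⇑σ)^[j] v),
        w.support = (List.range j).map (fun m => (⇑σ)^[m + 1] v) := by
    intro j
    induction j with
    | zero => omega
    | succ j ih =>
      intro _ hjk
      rcases Nat.eq_zero_or_pos j with h1 | h1
      · subst h1
        exact ⟨SimpleGraph.Walk.nil, by rw [List.range_succ]; simp⟩
      · have hj1 : 1 ≤ j := h1
        obtain ⟨w, hw⟩ := ih hj1 (by omega)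
        have ha : T.Adj ((⇑σ)^[j] v) ((⇑σ)^[j + 1] v) := hadj j (by omega)
        refine ⟨w.concat ha, ?_⟩
        rw [SimpleGraph.Walk.support_concat, hw, List.range_succ, List.map_append]
        simp
  obtain ⟨w, hw⟩ := aux k (by omega) le_rfl
  have hlen : w.support.length = k := by rw [hw]; simp
  have hnd : w.support.Nodup := by
    rw [hw]
    refine List.Nodup.map_on ?_ List.nodup_range
    intro m1 hm1 m2 hm2 heq
    rw [List.mem_range] at hm1 hm2
    have inj := Function.iterate_injOn_Iio_minimalPeriod (f := ⇑σ) (x := v)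
    rcases Nat.lt_or_ge (m1 + 1) k with h1 | h1
    · rcases Nat.lt_or_ge (m2 + 1) k with h2 | h2
      · have := inj (Set.mem_Iio.mpr h1) (Set.mem_Iio.mpr h2) heq
        omega
      · have hm2k : m2 + 1 = k := by omega
        rw [hm2k, hkfix] at heq
        have : (⇑σ)^[m1+1] v = (⇑σ)^[0] v := heq
        have := inj (Set.mem_Iio.mpr h1) (Set.mem_Iio.mpr hkpos) this
        omega
    · have hm1k : m1 + 1 = k := by omega
      rcases Nat.lt_or_ge (m2 + 1) k with h2 | h2
      · rw [hm1k, hkfix] at heq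
        have : (⇑σ)^[0] v = (⇑σ)^[m2+1] v := heq
        have := inj (Set.mem_Iio.mpr hkpos) (Set.mem_Iio.mpr h2) this
        omega
      · omega
  have hstart : (⇑σ)^[1] v = σ v := rfl
  let w' : T.Walk (σ v) v := (w.copy hstart hkfix)
  have hnd' : w'.support.Nodup := by
    rw [SimpleGraph.Walk.support_copy]; exact hnd
  have hlen' : w'.support.length = k := by
    rw [SimpleGraph.Walk.support_copy]; exact hlen
  let p2 : T.Path (σ v) v := ⟨w', SimpleGraph.Walk.IsPath.mk' hnd'⟩
  let p1 : T.Path (σ v) v := SimpleGraph.Path.singleton (hσ v hmoved0)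
  have : p1 = p2 := SimpleGraph.isAcyclic_iff_path_unique.mp hA p1 p2
  have hl : (p1 : T.Walk (σ v) v).support.length =
      (p2 : T.Walk (σ v) v).support.length := by rw [this]
  have hl1 : (p1 : T.Walk (σ v) v).support.length = 2 := by
    simp [p1, SimpleGraph.Path.singleton]
  rw [hl1] at hl
  have : (p2 : T.Walk (σ v) v).support.length = k := hlen'
  omega

lemma two_of_edge {e : Sym2 (Fin n)} (he : e ∈ T.edgeFinset) :
    (Finset.univ.filter (fun v => v ∈ e)).card = 2 := by
  induction e using Sym2.ind with
  | _ a b =>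
    have hab : a ≠ b := by
      rw [SimpleGraph.mem_edgeFinset, SimpleGraph.mem_edgeSet] at he
      exact he.ne
    have heq : Finset.univ.filter (fun v => v ∈ s(a, b)) = {a, b} := by
      ext v
      simp [Sym2.mem_iff]
    rw [heq, Finset.card_insert_of_notMem (by simp [hab]), Finset.card_singleton]

lemma F_mperm {M : Finset (Sym2 (Fin n))} (hM : M ∈ matchingsOf T)
    (hiso : ∀ v, 0 < T.degree v) :
    (∏ i, T.lapMatrix ℚ ((mperm hM) i) i) =
      (∏ v, (T.degree v : ℚ)) *
        ∏ e ∈ M, (∏ v ∈ Finset.univ.filter (fun v => v ∈ e), (T.degree v : ℚ))⁻¹ := by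
  classical
  set p : Fin n → Prop := fun v => ∃ e ∈ M, v ∈ e with hp
  have hbi : Finset.univ.filter p =
      M.biUnion (fun e => Finset.univ.filter (fun v => v ∈ e)) := by
    ext v
    simp [hp]
  have hdisj : ∀ e ∈ M, ∀ f ∈ M, e ≠ f →
      Disjoint (Finset.univ.filter (fun v => v ∈ e))
        (Finset.univ.filter (fun v => v ∈ f)) := by
    intro e he f hf hne
    rw [Finset.disjoint_left]
    intro v hv1 hv2
    rw [Finset.mem_filter] at hv1 hv2
    exact (Finset.mem_filter.mp hM).2 e he f hf hne v ⟨hv1.2, hv2.2⟩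
  have hdisj' : Set.PairwiseDisjoint (M : Set (Sym2 (Fin n)))
      (fun e => Finset.univ.filter (fun v => v ∈ e)) := by
    intro e he f hf hne
    exact hdisj e he f hf hne
  have hcard : (Finset.univ.filter p).card = 2 * M.card := by
    rw [hbi, Finset.card_biUnion hdisj,
      Finset.sum_congr rfl (fun e he => two_of_edge (matching_sub hM he))]
    rw [Finset.sum_const, smul_eq_mul, mul_comm]
  have hL : ∏ i, T.lapMatrix ℚ ((mperm hM) i) i =
      ∏ v ∈ Finset.univ.filter (fun v => ¬ p v), (T.degree v : ℚ) := by
    rw [← Finset.prod_filter_mul_prod_filter_not Finset.univ p]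
    have h1 : ∏ i ∈ Finset.univ.filter p, T.lapMatrix ℚ ((mperm hM) i) i
        = (-1 : ℚ) ^ (Finset.univ.filter p).card := by
      rw [Finset.prod_congr rfl (g := fun _ => (-1 : ℚ)) ?_, Finset.prod_const]
      intro v hv
      have hv' : p v := (Finset.mem_filter.mp hv).2
      have hspec := mf_spec hv'
      have hne := mf_ne hM hv'
      have hadj : T.Adj v (mf M v) := by
        have := matching_sub hM hspec
        rwa [SimpleGraph.mem_edgeFinset, SimpleGraph.mem_edgeSet] at this
      rw [mperm_apply, lap_off T hne, if_pos hadj.symm]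
    have h2 : ∏ i ∈ Finset.univ.filter (fun v => ¬ p v),
        T.lapMatrix ℚ ((mperm hM) i) i
        = ∏ v ∈ Finset.univ.filter (fun v => ¬ p v), (T.degree v : ℚ) := by
      refine Finset.prod_congr rfl ?_
      intro v hv
      have hv' : ¬ p v := (Finset.mem_filter.mp hv).2
      rw [mperm_apply, mf_fixed hv', lap_diag]
    rw [h1, h2, hcard, pow_mul]
    norm_num
  have hdeg : ∏ v, (T.degree v : ℚ) =
      (∏ e ∈ M, ∏ v ∈ Finset.univ.filter (fun v => v ∈ e), (T.degree v : ℚ)) *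
        ∏ v ∈ Finset.univ.filter (fun v => ¬ p v), (T.degree v : ℚ) := by
    rw [← Finset.prod_filter_mul_prod_filter_not Finset.univ p, hbi,
      Finset.prod_biUnion hdisj']
  rw [hL, hdeg,
    mul_comm (∏ e ∈ M, ∏ v ∈ Finset.univ.filter (fun v => v ∈ e), (T.degree v : ℚ)),
    mul_assoc, ← Finset.prod_mul_distrib]
  have hone : ∏ e ∈ M, ((∏ v ∈ Finset.univ.filter (fun v => v ∈ e), (T.degree v : ℚ)) *
      (∏ v ∈ Finset.univ.filter (fun v => v ∈ e), (T.degree v : ℚ))⁻¹) = 1 := by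
    refine Finset.prod_eq_one ?_
    intro e he
    refine mul_inv_cancel₀ ?_
    refine Finset.prod_ne_zero_iff.mpr ?_
    intro v _
    exact_mod_cast (hiso v).ne'
  rw [hone, mul_one]

end Aux

/-- For a tree `T` with no isolated vertices, the Laplacian ratio
`π(T) = per(L(T)) / ∏ d(v)` equals the sum over all matchings `M` of
`∏_{uv ∈ M} 1/(d(u)d(v))`. -/
theorem lapRatio_eq_sum_matchings
    (n : ℕ) (hn : 2 ≤ n) (T : SimpleGraph (Fin n)) [DecidableRel T.Adj]
    (hT : T.IsTree) (hiso : ∀ v, 0 < T.degree v) :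
    (T.lapMatrix ℚ).permanent / ∏ v, (T.degree v : ℚ) =
      ∑ M ∈ matchingsOf T,
        ∏ e ∈ M, (∏ v ∈ Finset.univ.filter (fun v => v ∈ e), (T.degree v : ℚ))⁻¹ := by
  classical
  set P : Equiv.Perm (Fin n) → Prop := fun σ => ∀ v, σ v ≠ v → T.Adj (σ v) v with hP
  -- Step A: the permanent is the sum over edge-respecting permutations
  have stepA : (T.lapMatrix ℚ).permanent =
      ∑ σ ∈ Finset.univ.filter P, ∏ i, T.lapMatrix ℚ (σ i) i := by
    rw [Matrix.permanent]
    symm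
    refine Finset.sum_filter_of_ne ?_
    intro σ _ hne
    intro v hv
    by_contra hadj
    exact hne (Finset.prod_eq_zero (Finset.mem_univ v)
      (by rw [lap_off T hv, if_neg hadj]))
  -- Step B: bijection between matchings and edge-respecting permutations
  have stepB : ∑ M ∈ matchingsOf T,
      ((∏ v, (T.degree v : ℚ)) *
        ∏ e ∈ M, (∏ v ∈ Finset.univ.filter (fun v => v ∈ e), (T.degree v : ℚ))⁻¹) =
      ∑ σ ∈ Finset.univ.filter P, ∏ i, T.lapMatrix ℚ (σ i) i := by
    refine Finset.sum_bij (fun M hM => mperm hM) ?_ ?_ ?_ ?_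
    · -- maps into the filter
      intro M hM
      rw [Finset.mem_filter]
      refine ⟨Finset.mem_univ _, ?_⟩
      intro v hv
      rw [mperm_apply] at hv ⊢
      have hmat : ∃ e ∈ M, v ∈ e := by
        by_contra hc
        exact hv (mf_fixed hc)
      have hspec := mf_spec hmat
      have := matching_sub hM hspec
      rw [SimpleGraph.mem_edgeFinset, SimpleGraph.mem_edgeSet] at this
      exact this.symm
    · -- injective
      intro M₁ h1 M₂ h2 heq
      have key : ∀ (M₁ : Finset (Sym2 (Fin n))) (h1 : M₁ ∈ matchingsOf T)
          (M₂ : Finset (Sym2 (Fin n))) (h2 : M₂ ∈ matchingsOf T),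
          mperm h1 = mperm h2 → M₁ ⊆ M₂ := by
        intro M₁ h1 M₂ h2 heq e he
        induction e using Sym2.ind with
        | _ a b =>
          have hab : a ≠ b := by
            have := matching_sub h1 he
            rw [SimpleGraph.mem_edgeFinset, SimpleGraph.mem_edgeSet] at this
            exact this.ne
          have hchar : mf M₁ a = b := mf_char h1 he
          have h2' : mf M₂ a = b := by
            have := congrArg (fun σ : Equiv.Perm (Fin n) => σ a) heq
            simpa [mperm_apply, hchar] using this.symm
          have hmat : ∃ e ∈ M₂, a ∈ e := by
            by_contra hc
            rw [mf_fixed hc] at h2'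
            exact hab h2'
          have := mf_spec hmat
          rwa [h2'] at this
      exact Finset.Subset.antisymm (key M₁ h1 M₂ h2 heq) (key M₂ h2 M₁ h1 heq.symm)
    · -- surjective
      intro τ hτ
      rw [Finset.mem_filter] at hτ
      have hPτ : ∀ v, τ v ≠ v → T.Adj (τ v) v := hτ.2
      have hinv : ∀ v, τ (τ v) = v := invol_of_acyclic hT.2 τ hPτ
      set M : Finset (Sym2 (Fin n)) :=
        (Finset.univ.filter fun v => τ v ≠ v).image (fun v => s(v, τ v)) with hMdef
      have hmemM : ∀ e, e ∈ M ↔ ∃ a, τ a ≠ a ∧ s(a, τ a) = e := by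
        intro e
        simp [hMdef]
      have hMm : M ∈ matchingsOf T := by
        rw [matchingsOf, Finset.mem_filter, Finset.mem_powerset]
        constructor
        · intro e he
          obtain ⟨a, ha, rfl⟩ := (hmemM e).mp he
          rw [SimpleGraph.mem_edgeFinset, SimpleGraph.mem_edgeSet]
          exact (hPτ a ha).symm
        · intro e he f hf hne v hv
          obtain ⟨a, ha, rfl⟩ := (hmemM e).mp he
          obtain ⟨b, hb, rfl⟩ := (hmemM f).mp hf
          apply hne
          rcases Sym2.mem_iff.mp hv.1 with h1 | h1 <;>
            rcases Sym2.mem_iff.mp hv.2 with h2 | h2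
          · rw [h1] at h2; rw [h2]
          · rw [h1] at h2
            subst h2
            rw [hinv b, Sym2.eq_swap]
          · rw [h1] at h2
            rw [← h2, hinv a, Sym2.eq_swap]
          · rw [h1] at h2
            rw [τ.injective h2]
      refine ⟨M, hMm, ?_⟩
      ext v
      rw [mperm_apply]
      by_cases hv : τ v = v
      · have hun : ¬ ∃ e ∈ M, v ∈ e := by
          rintro ⟨e, he, hve⟩
          obtain ⟨a, ha, rfl⟩ := (hmemM e).mp he
          rcases Sym2.mem_iff.mp hve with h1 | h1
          · exact ha (h1 ▸ hv)
          · have h2 : v = a := by rw [← hinv a, ← h1, hv]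
            exact ha (by rw [← h1]; exact h2)
        rw [mf_fixed hun, hv]
      · have : s(v, τ v) ∈ M := (hmemM _).mpr ⟨v, hv, rfl⟩
        rw [mf_char hMm this]
    · -- values agree
      intro M hM
      exact (F_mperm hM hiso).symm
  have hdne : (∏ v, (T.degree v : ℚ)) ≠ 0 :=
    Finset.prod_ne_zero_iff.mpr (fun v _ => by exact_mod_cast (hiso v).ne')
  rw [stepA, ← stepB, ← Finset.mul_sum, mul_comm, mul_div_assoc, div_self hdne, mul_one]
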